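/- arXiv:2603.12107 — 2 statements merged into one kernel-verified Lean document; each statement's English description precedes it below -/
import Mathlib

section
/- Let m > 0, t_f > 0, I0 ∈ (0,1), and let x* ∈ (0, t_f) satisfy I(t_f − x*)·(m − x*) = 1. Then for every y ∈ [0, t_f] with y ≠ x*, one has 𝒟(x*, y) < 𝒟(y, y). In other words, x* satisfies the invasion condition: against any resident population strategy y ≠ x*, the strategy x* does strictly better than y does against itself, so x* can invade any other delay strategy. -/
/-!
Both cases come down to `1 + t < exp t`. The prevalence is logistic: over a time `d` its odds
`I / (1 - I)` grow by the factor `exp d`. Against a resident `y < x*` the invader is exposed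
only after its own distancing ends, and the odds shift turns the equilibrium condition
`I(t_f - x*)(m - x*) = 1` into `(1 - I(t_f - y))(m - y) < (1 - I(t_f - x*))(m - x*)`, which is
`1 + d < exp d` for `d = x* - y`. Against a resident `y > x*` both players face the prevalence
`I(t_f - y) < I(t_f - x*)`, so the invader's extra exposure factor
`exp(-I(t_f - y)(y - x*)) ≥ 1 - I(t_f - y)(y - x*)` costs less than the distancing time
`y - x*` it saves.
-/

/-- Prevalence function `I(u) = I0 / (I0 + (1 - I0) exp(-u))`. -/
noncomputable def Ifun (I0 u : ℝ) : ℝ := I0 / (I0 + (1 - I0) * Real.exp (-u))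

/-- Susceptibility probability `p(x, x̄)`. -/
noncomputable def pSus (tf I0 x xb : ℝ) : ℝ :=
  ((1 - Ifun I0 (tf - max x xb)) / (1 - I0)) *
    Real.exp (-(Ifun I0 (tf - max x xb)) * max (xb - x) 0)

/-- Restricted disutility `𝒟(x, x̄) = 1 - p(x,x̄)(1 - x/m)`. -/
noncomputable def Dis (m tf I0 x xb : ℝ) : ℝ := 1 - pSus tf I0 x xb * (1 - x / m)

open Real

section Prevalence

variable {I0 : ℝ} (hI0 : I0 ∈ Set.Ioo (0 : ℝ) 1)
include hI0

lemma Ifun_denom_pos (u : ℝ) : 0 < I0 + (1 - I0) * exp (-u) := by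
  have := exp_pos (-u)
  nlinarith [hI0.1, hI0.2]

lemma Ifun_pos (u : ℝ) : 0 < Ifun I0 u :=
  div_pos hI0.1 (Ifun_denom_pos hI0 u)

lemma Ifun_lt_one (u : ℝ) : Ifun I0 u < 1 := by
  rw [Ifun, div_lt_one (Ifun_denom_pos hI0 u)]
  nlinarith [exp_pos (-u), hI0.2]

lemma Ifun_strictMono : StrictMono (Ifun I0) := by
  intro u v huv
  apply div_lt_div_of_pos_left hI0.1 (Ifun_denom_pos hI0 v)
  have : exp (-v) < exp (-u) := exp_lt_exp.mpr (by linarith)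
  nlinarith [hI0.2]

lemma one_sub_Ifun (u : ℝ) :
    1 - Ifun I0 u = (1 - I0) * exp (-u) / (I0 + (1 - I0) * exp (-u)) := by
  rw [Ifun, one_sub_div (Ifun_denom_pos hI0 u).ne', add_sub_cancel_left]

lemma one_sub_Ifun_add (a d : ℝ) :
    1 - Ifun I0 (a + d) = (1 - Ifun I0 a) / (1 - Ifun I0 a + Ifun I0 a * exp d) := by
  have ha := Ifun_denom_pos hI0 a
  have hpos : 0 < (1 - I0) * exp (-a) + I0 * exp d := by
    nlinarith [exp_pos (-a), exp_pos d, hI0.1, hI0.2]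
  rw [one_sub_Ifun hI0, one_sub_Ifun hI0, Ifun, div_mul_eq_mul_div, ← add_div,
    div_div_div_cancel_right₀ ha.ne', eq_div_iff hpos.ne', neg_add, exp_add, exp_neg d]
  have hF := exp_pos d
  have hden : I0 + (1 - I0) * (exp (-a) * (exp d)⁻¹)
      = ((1 - I0) * exp (-a) + I0 * exp d) / exp d := by
    field_simp
    ring
  rw [hden]
  field_simp

lemma one_sub_Ifun_mul_lt_of_lt {a b c : ℝ} (hab : a < b) (heq : Ifun I0 a * (c + a) = 1) :
    (1 - Ifun I0 b) * (c + b) < (1 - Ifun I0 a) * (c + a) := by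
  obtain ⟨d, hd, rfl⟩ : ∃ d, 0 < d ∧ b = a + d := ⟨b - a, by linarith, by ring⟩
  have hq := Ifun_pos hI0 a
  have hq1 := Ifun_lt_one hI0 a
  have hexp := add_one_lt_exp hd.ne'
  have hden : 0 < 1 - Ifun I0 a + Ifun I0 a * exp d := by nlinarith
  rw [one_sub_Ifun_add hI0, div_mul_eq_mul_div, div_lt_iff₀ hden]
  nlinarith [mul_pos (sub_pos.mpr hq1) (sub_pos.mpr hexp)]

end Prevalence

lemma sub_lt_exp_neg_mul_mul {q A t : ℝ} (hA : 0 ≤ A) (hqA : q * A < 1) (ht : 0 < t) :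
    A - t < exp (-q * t) * A := by
  nlinarith [add_one_le_exp (-q * t)]

lemma Dis_lt_Dis_iff {m tf I0 x xb x' xb' : ℝ} (hm : 0 < m) :
    Dis m tf I0 x xb < Dis m tf I0 x' xb' ↔
      pSus tf I0 x' xb' * (m - x') < pSus tf I0 x xb * (m - x) := by
  have hfrac : ∀ p z : ℝ, p * (1 - z / m) = p * (m - z) / m := fun p z => by field_simp
  rw [Dis, Dis, hfrac, hfrac, sub_lt_sub_iff_left, div_lt_div_iff_of_pos_right hm]

lemma pSus_of_le {tf I0 x xb : ℝ} (h : xb ≤ x) :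
    pSus tf I0 x xb = (1 - Ifun I0 (tf - x)) / (1 - I0) := by
  rw [pSus, max_eq_left h, max_eq_right (by linarith), mul_zero, exp_zero, mul_one]

lemma pSus_of_ge {tf I0 x xb : ℝ} (h : x ≤ xb) :
    pSus tf I0 x xb =
      (1 - Ifun I0 (tf - xb)) / (1 - I0) * exp (-Ifun I0 (tf - xb) * (xb - x)) := by
  rw [pSus, max_eq_right h, max_eq_left (by linarith)]

theorem stmt1_general (m tf I0 xstar : ℝ) (hm : 0 < m)
    (hI0 : I0 ∈ Set.Ioo (0:ℝ) 1)
    (heq : Ifun I0 (tf - xstar) * (m - xstar) = 1) :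
    ∀ y ∈ Set.Icc (0:ℝ) tf, y ≠ xstar →
      Dis m tf I0 xstar y < Dis m tf I0 y y := by
  intro y _ hne
  have hI0' : 0 < 1 - I0 := sub_pos.mpr hI0.2
  have hmx : 0 < m - xstar := pos_of_mul_pos_right (heq ▸ one_pos) (Ifun_pos hI0 _).le
  rw [Dis_lt_Dis_iff hm, pSus_of_le le_rfl]
  rcases hne.lt_or_gt with hlt | hgt
  · rw [pSus_of_le hlt.le, div_mul_eq_mul_div, div_mul_eq_mul_div,
      div_lt_div_iff_of_pos_right hI0']
    have hdecr := one_sub_Ifun_mul_lt_of_lt hI0 (c := m - tf)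
      (by linarith : tf - xstar < tf - y) (by rwa [sub_add_sub_cancel])
    rwa [sub_add_sub_cancel, sub_add_sub_cancel] at hdecr
  · rw [pSus_of_ge hgt.le, mul_assoc]
    refine mul_lt_mul_of_pos_left ?_ (div_pos (sub_pos.mpr (Ifun_lt_one hI0 _)) hI0')
    have hlt : Ifun I0 (tf - y) * (m - xstar) < 1 :=
      heq ▸ mul_lt_mul_of_pos_right (Ifun_strictMono hI0 (by linarith)) hmx
    simpa only [sub_sub_sub_cancel_right] using
      sub_lt_exp_neg_mul_mul hmx.le hlt (sub_pos.mpr hgt)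

/-- An interior Nash equilibrium `x*` satisfies the invasion condition: against any
resident population strategy `y ≠ x*`, the strategy `x*` does strictly better than
`y` does against itself. -/
theorem stmt1 (m tf I0 xstar : ℝ) (hm : 0 < m) (htf : 0 < tf)
    (hI0 : I0 ∈ Set.Ioo (0:ℝ) 1) (hx : xstar ∈ Set.Ioo 0 tf)
    (heq : Ifun I0 (tf - xstar) * (m - xstar) = 1) :
    ∀ y ∈ Set.Icc (0:ℝ) tf, y ≠ xstar →
      Dis m tf I0 xstar y < Dis m tf I0 y y :=
  stmt1_general m tf I0 xstar hm hI0 heq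
end

section
/- Let m > 0, t_f > 0, I0 ∈ (0,1), and let x* ∈ (0, t_f) satisfy I(t_f − x*)·(m − x*) = 1. Then x* is the unique global minimizer on [0, t_f] of the emblematic disutility E(x̄) = 1 − (1 − x̄/m)·(1 − I(t_f − x̄))/(1 − I0): for all y ∈ [0, t_f], E(x*) ≤ E(y), with strict inequality for y ≠ x*. That is, the interior Nash equilibrium of the delay-strategy game coincides with the socially optimal delay strategy, so the game exhibits no free-riding. -/
/-- Emblematic disutility `E(x̄) = 1 - (1 - x̄/m)(1 - I(t_f - x̄))/(1 - I0)`. -/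
noncomputable def Embl (m tf I0 xb : ℝ) : ℝ :=
  1 - (1 - xb / m) * (1 - Ifun I0 (tf - xb)) / (1 - I0)

open Real Set

lemma Ifun_eq_mul_exp_div (I0 u : ℝ) :
    Ifun I0 u = I0 * exp u / (I0 * exp u + (1 - I0)) := by
  rw [Ifun, ← mul_div_mul_right I0 _ (exp_pos u).ne', add_mul, mul_assoc, ← exp_add,
    neg_add_cancel, exp_zero, mul_one]

lemma mul_exp_add_one_sub_pos {I0 : ℝ} (hI0 : I0 ∈ Icc (0 : ℝ) 1) (u : ℝ) :
    0 < I0 * exp u + (1 - I0) := by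
  rcases hI0.1.eq_or_lt with rfl | h0
  · norm_num
  · nlinarith [exp_pos u, hI0.2, mul_pos h0 (exp_pos u)]

lemma Ifun_mul_eq_one_iff {I0 : ℝ} (hI0 : I0 ∈ Icc (0 : ℝ) 1) (u c : ℝ) :
    Ifun I0 u * c = 1 ↔ I0 * exp u * c = I0 * exp u + (1 - I0) := by
  rw [Ifun_eq_mul_exp_div, div_mul_eq_mul_div, div_eq_one_iff_eq
    (mul_exp_add_one_sub_pos hI0 u).ne']

lemma Embl_eq {m I0 : ℝ} (hm : m ≠ 0) (hI0 : I0 ∈ Ico (0 : ℝ) 1) (tf x : ℝ) :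
    Embl m tf I0 x = 1 - (m - x) / (I0 * exp (tf - x) + (1 - I0)) / m := by
  have hD := (mul_exp_add_one_sub_pos ⟨hI0.1, hI0.2.le⟩ (tf - x)).ne'
  have hI0' : 1 - I0 ≠ 0 := (sub_pos.2 hI0.2).ne'
  rw [Embl, Ifun_eq_mul_exp_div]
  field_simp
  ring

lemma sub_div_lt_sub_div_of_mul_sub_eq {a b m x y : ℝ} (ha : 0 < a) (hb : 0 ≤ b)
    (hx : a * (m - x) = a + b) (hy : y ≠ x) :
    (m - y) / (a * exp (x - y) + b) < (m - x) / (a + b) := by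
  have hmx : 0 < m - x := pos_of_mul_pos_right (hx ▸ by linarith) ha.le
  have hexp : (x - y) + 1 < exp (x - y) := add_one_lt_exp (sub_ne_zero.2 hy.symm)
  have hay : a * (m - y) < a * exp (x - y) + b := by nlinarith
  rw [div_lt_div_iff₀ (by positivity) (by linarith), ← hx]
  nlinarith [mul_lt_mul_of_pos_left hay hmx]

lemma sub_div_lt_sub_div_of_Ifun_mul_eq_one {m tf I0 x y : ℝ} (hI0 : I0 ∈ Ioc (0 : ℝ) 1)
    (hx : Ifun I0 (tf - x) * (m - x) = 1) (hy : y ≠ x) :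
    (m - y) / (I0 * exp (tf - y) + (1 - I0)) < (m - x) / (I0 * exp (tf - x) + (1 - I0)) := by
  have hshift : I0 * exp (tf - y) = I0 * exp (tf - x) * exp (x - y) := by
    rw [mul_assoc, ← exp_add, sub_add_sub_cancel]
  rw [hshift]
  exact sub_div_lt_sub_div_of_mul_sub_eq (by have := hI0.1; positivity) (sub_nonneg.2 hI0.2)
    ((Ifun_mul_eq_one_iff ⟨hI0.1.le, hI0.2⟩ _ _).1 hx) hy

theorem stmt6_general (m tf I0 xstar : ℝ) (hm : 0 < m)
    (hI0 : I0 ∈ Set.Ioo (0:ℝ) 1)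
    (heq : Ifun I0 (tf - xstar) * (m - xstar) = 1) :
    ∀ y ∈ Set.Icc (0:ℝ) tf,
      Embl m tf I0 xstar ≤ Embl m tf I0 y ∧
      (y ≠ xstar → Embl m tf I0 xstar < Embl m tf I0 y) := by
  have hlt : ∀ y ≠ xstar, Embl m tf I0 xstar < Embl m tf I0 y := fun y hy => by
    rw [Embl_eq hm.ne' ⟨hI0.1.le, hI0.2⟩, Embl_eq hm.ne' ⟨hI0.1.le, hI0.2⟩,
      sub_lt_sub_iff_left]
    exact div_lt_div_of_pos_right
      (sub_div_lt_sub_div_of_Ifun_mul_eq_one ⟨hI0.1, hI0.2.le⟩ heq hy) hm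
  intro y _
  rcases eq_or_ne y xstar with rfl | hy
  · exact ⟨le_rfl, fun h => (h rfl).elim⟩
  · exact ⟨(hlt y hy).le, fun _ => hlt y hy⟩

/-- The interior Nash equilibrium `x*` of the delay-strategy game is the unique global
minimizer on `[0, t_f]` of the emblematic disutility: no free-riding. -/
theorem stmt6 (m tf I0 xstar : ℝ) (hm : 0 < m) (htf : 0 < tf)
    (hI0 : I0 ∈ Set.Ioo (0:ℝ) 1) (hx : xstar ∈ Set.Ioo 0 tf)
    (heq : Ifun I0 (tf - xstar) * (m - xstar) = 1) :
    ∀ y ∈ Set.Icc (0:ℝ) tf,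
      Embl m tf I0 xstar ≤ Embl m tf I0 y ∧
      (y ≠ xstar → Embl m tf I0 xstar < Embl m tf I0 y) :=
  stmt6_general m tf I0 xstar hm hI0 heq
end
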